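/- With S_n and R_n as above (coefficients of log(zG(z)) and of the compositional inverse of G, respectively), for every n ≥ 1: R_n = ∑_{l≥1} (1/l!) (−n+1)^{l−1} ∑_{k₁+⋯+k_l=n, k_i≥1} S_{k₁}⋯S_{k_l}. -/

import Mathlib

/-!
Put `T = ∑ Sₙ Xⁿ`, so that the hypothesis on `S` says `A = exp T`. Lagrange inversion gives
`n Rₙ = [X^{n-1}] A' A⁻ⁿ`, because `[X^{n-1}] ((X A)^k)' A⁻ⁿ = n δₖₙ` for `1 ≤ k ≤ n`: up to a
monomial factor this is the residue of a derivative of a Laurent series. Now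
`A' A⁻ⁿ = T' exp((1 - n) T) = (F ∘ T)'` for the primitive `F = ∑_{l ≥ 1} (1 - n)^{l-1} Xˡ / l!`
of `exp((1 - n) X)`, so `[X^{n-1}] A' A⁻ⁿ = n [Xⁿ] F(T) = n ∑ₗ (1 - n)^{l-1} / l! · [Xⁿ] Tˡ`.
-/

open Finset PowerSeries

/-- `compSum S l n = ∑_{k₁+⋯+k_l = n, kᵢ ≥ 1} S_{k₁} ⋯ S_{k_l}`. -/
noncomputable def compSum (S : ℕ → ℝ) (l n : ℕ) : ℝ :=
  ∑ c ∈ (Finset.Nat.antidiagonalTuple l n).filter (fun c => ∀ i, 1 ≤ c i),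
    ∏ i, S (c i)

theorem Derivation.map_pow_eq_nsmul_mul {R B : Type*} [CommSemiring R] [CommSemiring B]
    [Algebra R B] (D : Derivation R B B) {u M : B} (h : D u = u * M) (k : ℕ) :
    D (u ^ k) = k • (u ^ k * M) := by
  rcases k with _ | k
  · simp
  · rw [D.leibniz_pow, h, Nat.add_sub_cancel, smul_eq_mul, pow_succ, mul_assoc]

namespace PowerSeries

section CommRing

variable {R : Type*} [CommRing R]

theorem coeff_pow_eq_sum_antidiagonalTuple (f : R⟦X⟧) (l n : ℕ) :
    coeff n (f ^ l) = ∑ c ∈ Finset.Nat.antidiagonalTuple l n, ∏ i, coeff (c i) f := by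
  rw [← Fin.prod_const, coeff_prod, finsuppAntidiag, sum_map,
    ← piAntidiag_univ_fin_eq_antidiagonalTuple]
  exact sum_attach _ fun c : Fin l → ℕ => ∏ i, coeff (c i) f

theorem coeff_pow_eq_zero_of_lt {f : R⟦X⟧} (hf : constantCoeff f = 0) {m l : ℕ} (h : m < l) :
    coeff m (f ^ l) = 0 :=
  X_pow_dvd_iff.mp (pow_dvd_pow_of_dvd (X_dvd_iff.mpr hf) l) m h

theorem coeff_subst_eq_sum_range {T : R⟦X⟧} (hT : constantCoeff T = 0) (f : R⟦X⟧) (m : ℕ) :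
    coeff m (f.subst T) = ∑ l ∈ range (m + 1), coeff l f * coeff m (T ^ l) := by
  simp_rw [coeff_subst' (HasSubst.of_constantCoeff_zero' hT), ← smul_eq_mul]
  refine finsum_eq_sum_of_support_subset _ fun l hl => ?_
  rw [coe_range, Set.mem_Iio, Nat.lt_succ_iff]
  by_contra! h
  exact hl (by simp only [coeff_pow_eq_zero_of_lt hT h, smul_zero])

theorem coeff_X_mul_derivative (f : R⟦X⟧) (m : ℕ) :
    coeff m (X * d⁄dX R f) = m * coeff m f := by
  rcases m with _ | m
  · simp
  · rw [coeff_succ_X_mul, coeff_derivative, mul_comm, Nat.cast_succ]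

theorem coeff_derivative_mul_congr {f g : R⟦X⟧} (h : R⟦X⟧) {n : ℕ}
    (hfg : ∀ m ≤ n + 1, coeff m f = coeff m g) :
    coeff n (d⁄dX R f * h) = coeff n (d⁄dX R g * h) := by
  simp only [coeff_mul, coeff_derivative]
  refine sum_congr rfl fun ij hij => ?_
  rw [hfg (ij.1 + 1) (by rw [HasAntidiagonal.mem_antidiagonal] at hij; omega)]

variable [IsAddTorsionFree R]

/-- The residue of the derivative of the Laurent series `C^m X^{-m}` vanishes. -/
theorem coeff_pow_mul_one_sub_X_mul_eq_zero {C M : R⟦X⟧} (hC : d⁄dX R C = C * M) {m : ℕ}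
    (hm : m ≠ 0) : coeff m (C ^ m * (1 - X * M)) = 0 := by
  have key : m • coeff m (C ^ m) = m • coeff m (X * (C ^ m * M)) :=
    calc m • coeff m (C ^ m) = coeff m (X * d⁄dX R (C ^ m)) := by
          rw [coeff_X_mul_derivative, nsmul_eq_mul]
      _ = m • coeff m (X * (C ^ m * M)) := by
          rw [(d⁄dX R).map_pow_eq_nsmul_mul hC, mul_smul_comm, map_nsmul]
  rw [mul_one_sub, ← mul_assoc, mul_comm (C ^ m) X, mul_assoc, map_sub, sub_eq_zero]
  exact nsmul_right_injective hm key

theorem coeff_derivative_X_mul_pow_mul_pow {A C : R⟦X⟧} (hAC : A * C = 1) {k p : ℕ}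
    (hk : 1 ≤ k) (hkp : k ≤ p + 1) :
    coeff p (d⁄dX R ((X * A) ^ k) * C ^ (p + 1)) = if k = p + 1 then (p + 1 : R) else 0 := by
  obtain ⟨m, hm⟩ : ∃ m, p + 1 = k + m := ⟨p + 1 - k, by omega⟩
  set M := -(d⁄dX R A * C)
  have hC : d⁄dX R C = C * M := by
    have h := congrArg (d⁄dX R) hAC
    rw [Derivation.leibniz, Derivation.map_one_eq_zero, smul_eq_mul, smul_eq_mul] at h
    linear_combination C * h - d⁄dX R C * hAC
  -- the Euler derivation `X • d⁄dX` spares the exponent `k - 1` in `((X * A) ^ k)'`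
  have hXA : ((X : R⟦X⟧) • d⁄dX R) (X * A) = X * A * (1 - X * M) := by
    rw [Derivation.smul_apply, Derivation.leibniz, derivative_X, smul_eq_mul, smul_eq_mul,
      smul_eq_mul]
    linear_combination (-(X ^ 2 * d⁄dX R A)) * hAC
  have hAkCk : A ^ k * C ^ k = 1 := by rw [← mul_pow, hAC, one_pow]
  calc coeff p (d⁄dX R ((X * A) ^ k) * C ^ (p + 1))
      = coeff (k + m) (((X : R⟦X⟧) • d⁄dX R) ((X * A) ^ k) * C ^ (k + m)) := by
        rw [← hm, Derivation.smul_apply, smul_eq_mul, mul_assoc, coeff_succ_X_mul]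
    _ = coeff (k + m) (k • (X ^ k * (C ^ m * (1 - X * M)))) := by
        rw [((X : R⟦X⟧) • d⁄dX R).map_pow_eq_nsmul_mul hXA, smul_mul_assoc]
        congr 2
        linear_combination (X ^ k * C ^ m * (1 - X * M)) * hAkCk
    _ = if k = p + 1 then (p + 1 : R) else 0 := by
        rw [map_nsmul, add_comm, coeff_X_pow_mul]
        rcases eq_or_ne m 0 with rfl | hm0
        · obtain rfl : k = p + 1 := by omega
          simp
        · rw [coeff_pow_mul_one_sub_X_mul_eq_zero hC hm0, smul_zero, if_neg (by omega)]

theorem coeff_derivative_mul_pow_of_eq_one_add_sum {A C : R⟦X⟧} (hAC : A * C = 1) (r : ℕ → R)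
    (hA : ∀ m, coeff m A = (if m = 0 then 1 else 0) + ∑ k ∈ Icc 1 m, r k * coeff m ((X * A) ^ k))
    (p : ℕ) : coeff p (d⁄dX R A * C ^ (p + 1)) = (p + 1) * r (p + 1) := by
  set B := 1 + ∑ k ∈ Icc 1 (p + 1), r k • (X * A) ^ k
  have hAB : ∀ m ≤ p + 1, coeff m A = coeff m B := by
    intro m hm
    simp only [B, hA m, map_add, coeff_one, map_sum, map_smul, smul_eq_mul]
    congr 1
    refine sum_subset (Icc_subset_Icc_right hm) fun k hk hkm => ?_
    rw [coeff_pow_eq_zero_of_lt (by simp) (by simp at hk hkm; omega), mul_zero]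
  rw [coeff_derivative_mul_congr _ hAB]
  simp only [B, map_add, Derivation.map_one_eq_zero, zero_add, map_sum, Derivation.map_smul,
    sum_mul, smul_mul_assoc, map_smul, smul_eq_mul]
  rw [sum_eq_single_of_mem (p + 1) (by simp) fun k hk hkp => ?_]
  · rw [coeff_derivative_X_mul_pow_mul_pow hAC (by omega) le_rfl, if_pos rfl, mul_comm]
  · rw [mem_Icc] at hk
    rw [coeff_derivative_X_mul_pow_mul_pow hAC hk.1 hk.2, if_neg hkp, mul_zero]

end CommRing

section Field

variable {K : Type*} [Field K] [CharZero K]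

/-- A primitive of `exp (c X)`; its constant term (`1`, by truncated subtraction) plays no role. -/
def expPrimitive (c : K) : K⟦X⟧ :=
  mk fun n => c ^ (n - 1) / n.factorial

theorem derivative_expPrimitive (c : K) : d⁄dX K (expPrimitive c) = rescale c (exp K) := by
  ext n
  rw [coeff_derivative, expPrimitive, coeff_mk, coeff_rescale, coeff_exp, Nat.add_sub_cancel,
    Nat.factorial_succ]
  push_cast
  field_simp

theorem derivative_rescale_exp (c : K) : d⁄dX K (rescale c (exp K)) = c • rescale c (exp K) := by
  ext n
  rw [coeff_derivative, map_smul, coeff_rescale, coeff_rescale, coeff_exp, coeff_exp,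
    Nat.factorial_succ, smul_eq_mul]
  push_cast
  field_simp
  ring

theorem derivative_subst_rescale_exp {T : K⟦X⟧} (hT : constantCoeff T = 0) (c : K) :
    d⁄dX K ((rescale c (exp K)).subst T) = c • ((rescale c (exp K)).subst T * d⁄dX K T) := by
  have hT' := HasSubst.of_constantCoeff_zero' hT
  rw [derivative_subst hT', derivative_rescale_exp, subst_smul hT', smul_mul_assoc]

theorem constantCoeff_subst_rescale_exp {T : K⟦X⟧} (hT : constantCoeff T = 0) (c : K) :
    constantCoeff ((rescale c (exp K)).subst T) = 1 := by
  rw [← coeff_zero_eq_constantCoeff_apply, coeff_subst_eq_sum_range hT]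
  simp

theorem pow_eq_subst_rescale_exp {A C T : K⟦X⟧} (hAC : A * C = 1) (hA : constantCoeff A = 1)
    (hT : constantCoeff T = 0) (hAT : d⁄dX K A = A * d⁄dX K T) (p : ℕ) :
    C ^ p = (rescale (-(p : K)) (exp K)).subst T := by
  set E : K⟦X⟧ := (rescale (-(p : K)) (exp K)).subst T with hE
  have hApE : A ^ p * E = 1 := by
    refine derivative.ext ?_ (by simp [E, hA, constantCoeff_subst_rescale_exp hT])
    rw [Derivation.leibniz, (d⁄dX K).map_pow_eq_nsmul_mul hAT, derivative_subst_rescale_exp hT,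
      ← hE, Derivation.map_one_eq_zero]
    simp only [smul_eq_mul, nsmul_eq_mul, Algebra.smul_def, map_neg, map_natCast]
    ring
  calc C ^ p = C ^ p * (A ^ p * E) := by rw [hApE, mul_one]
    _ = E := by rw [← mul_assoc, ← mul_pow, mul_comm C, hAC, one_pow, one_mul]

theorem eq_sum_coeff_pow_of_derivative_eq_mul {A T : K⟦X⟧} (r : ℕ → K)
    (hA0 : constantCoeff A = 1) (hT0 : constantCoeff T = 0) (hAT : d⁄dX K A = A * d⁄dX K T)
    (hA : ∀ m, coeff m A = (if m = 0 then 1 else 0) + ∑ k ∈ Icc 1 m, r k * coeff m ((X * A) ^ k))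
    {n : ℕ} (hn : 1 ≤ n) :
    r n = ∑ l ∈ Icc 1 n, (1 - (n : K)) ^ (l - 1) / l.factorial * coeff n (T ^ l) := by
  obtain ⟨p, rfl⟩ : ∃ p, n = p + 1 := ⟨n - 1, by omega⟩
  have hAC : A * A⁻¹ = 1 := PowerSeries.mul_inv_cancel A (by simp [hA0])
  have hF : d⁄dX K A * A⁻¹ ^ (p + 1) = d⁄dX K ((expPrimitive (-(p : K))).subst T) := by
    rw [derivative_subst (HasSubst.of_constantCoeff_zero' hT0), derivative_expPrimitive,
      ← pow_eq_subst_rescale_exp hAC hA0 hT0 hAT, hAT, pow_succ]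
    linear_combination (d⁄dX K T * A⁻¹ ^ p) * hAC
  have hres := coeff_derivative_mul_pow_of_eq_one_add_sum hAC r hA p
  rw [hF, coeff_derivative, coeff_subst_eq_sum_range hT0, mul_comm] at hres
  refine mul_left_cancel₀ (Nat.cast_add_one_ne_zero p) (hres.symm.trans ?_)
  rw [range_eq_Ico, sum_eq_sum_Ico_succ_bot (by omega), zero_add, Ico_add_one_right_eq_Icc,
    pow_zero, coeff_one, if_neg (Nat.succ_ne_zero p), mul_zero, zero_add]
  congr 1
  refine sum_congr rfl fun l _ => ?_
  rw [expPrimitive, coeff_mk]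
  push_cast
  ring

end Field

end PowerSeries

theorem coeff_pow_mk_eq_compSum (S : ℕ → ℝ) (l n : ℕ) :
    coeff n ((mk fun m => if 1 ≤ m then S m else 0) ^ l) = compSum S l n := by
  rw [coeff_pow_eq_sum_antidiagonalTuple, compSum, sum_filter]
  refine sum_congr rfl fun c _ => ?_
  simp only [coeff_mk]
  rw [Fintype.prod_ite_zero]
  congr

/-- Here `A(w) = z·G(z)` with `w = 1/z`; `hS` encodes `A = exp (∑ Sₙ wⁿ)` as
`A' = A·(∑ Sₙ wⁿ)'`, and `hR` encodes the compositional inverse as `A = 1 + ∑_{n≥1} Rₙ (w·A)ⁿ`. -/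
theorem R_in_terms_of_S (A : PowerSeries ℝ) (R S : ℕ → ℝ)
    (hA0 : coeff 0 A = 1)
    (hR : ∀ m : ℕ, coeff m A =
      (if m = 0 then 1 else 0) +
        ∑ n ∈ Finset.Icc 1 m, R n * coeff m ((X * A) ^ n))
    (hS : ∀ m : ℕ, ((m : ℝ) + 1) * coeff (m + 1) A =
      coeff m (A * PowerSeries.mk fun n => ((n : ℝ) + 1) * S (n + 1))) :
    ∀ n : ℕ, 1 ≤ n →
      R n = ∑ l ∈ Finset.Icc 1 n,
        ((1 - (n : ℝ)) ^ (l - 1) / (Nat.factorial l)) * compSum S l n := by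
  intro n hn
  set T : ℝ⟦X⟧ := mk fun m => if 1 ≤ m then S m else 0
  have hT0 : constantCoeff T = 0 := by
    rw [← coeff_zero_eq_constantCoeff_apply, coeff_mk, if_neg (by omega)]
  have hAT : d⁄dX ℝ A = A * d⁄dX ℝ T := by
    ext m
    rw [coeff_derivative, mul_comm, hS m]
    congr 2
    ext k
    rw [coeff_mk, coeff_derivative, coeff_mk, if_pos (by omega), mul_comm]
  rw [eq_sum_coeff_pow_of_derivative_eq_mul R (by rwa [← coeff_zero_eq_constantCoeff_apply])
    hT0 hAT hR hn]
  simp_rw [T, coeff_pow_mk_eq_compSum]
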